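/- arXiv:2601.09576 — 4 statements merged into one kernel-verified Lean document; each statement's English description precedes it below -/
import Mathlib

section
/- Let H be a real Hilbert space, let K be a closed subspace of H whose orthogonal complement N = K^⊥ is finite-dimensional, and define the square seminorm J : H → ℝ by J(η) = ‖P_K η‖², where P_K is the orthogonal projection of H onto K (so that N = {η ∈ H : J(η) = 0} is the null space of J). Let L : H → ℝ be continuous and strictly convex on H. If the restriction of L to N attains a minimum (i.e., there exists η₀ ∈ N with L(η₀) ≤ L(η) for all η ∈ N), then the functional η ↦ L(η) + J(η) has a unique minimizer over H: there exists a unique η* ∈ H such that L(η*) + J(η*) ≤ L(η) + J(η) for all η ∈ H. -/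
/-!
Separating the strict epigraph of `L` from `Kᗮ × {L η₀}` (Hahn–Banach) gives a continuous linear
`φ` vanishing on `Kᗮ` with `L η₀ + φ ≤ L`. Since `φ η = φ (P_K η)`, this yields
`L η + J η ≥ L η₀ - ‖φ‖ ‖P_K η‖ + ‖P_K η‖²`: the functional is bounded below and `P_K` is bounded
on its sublevel sets. Along `Kᗮ`, the strict minimum at `η₀` and compactness of the unit sphere of
the finite-dimensional space `Kᗮ` make `L` grow linearly on tubes around `Kᗮ`, so the sublevel
sets are bounded. For a minimizing sequence the parallelogram law makes the `K`-components Cauchy,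
while the `Kᗮ`-components stay in a compact ball; a subsequence converges to a minimizer.
Uniqueness is strict convexity of `L + J`.
-/

open Set Filter Topology Metric

theorem StrictConvexOn.lt_of_isMinOn {E : Type*} [AddCommGroup E] [Module ℝ E] {s : Set E}
    {f : E → ℝ} (hf : StrictConvexOn ℝ s f) {x y : E} (hmin : IsMinOn f s x) (hx : x ∈ s)
    (hy : y ∈ s) (hne : y ≠ x) : f x < f y :=
  lt_of_not_ge fun hle => hne <| hf.eq_of_isMinOn (fun _ hz => hle.trans (hmin hz)) hmin hy hx

theorem cauchySeq_of_dist_sq_le {α : Type*} [PseudoMetricSpace α] {u : ℕ → α} {f : ℕ → ℝ}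
    (hf : Tendsto f atTop (𝓝 0)) (h : ∀ i j, dist (u i) (u j) ^ 2 ≤ f i + f j) :
    CauchySeq u := by
  rw [cauchySeq_iff_tendsto_dist_atTop_0]
  have hsum : Tendsto (fun p : ℕ × ℕ => √(f p.1 + f p.2)) atTop (𝓝 0) := by
    rw [← prod_atTop_atTop_eq]
    simpa using ((hf.comp tendsto_fst).add (hf.comp tendsto_snd)).sqrt
  exact squeeze_zero (fun _ => dist_nonneg) (fun p => Real.le_sqrt_of_sq_le (h p.1 p.2)) hsum

theorem exists_forall_le_of_tendsto_subseq {X : Type*} [TopologicalSpace X] [Nonempty X]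
    {F : X → ℝ} (hF : Continuous F) (hbdd : BddBelow (range F))
    (hsubseq : ∀ e : ℕ → X, Antitone (F ∘ e) → Tendsto (F ∘ e) atTop (𝓝 (⨅ x, F x)) →
      ∃ x, ∃ ψ : ℕ → ℕ, StrictMono ψ ∧ Tendsto (e ∘ ψ) atTop (𝓝 x)) :
    ∃ x, ∀ y, F x ≤ F y := by
  obtain ⟨u, hu_anti, hu_lim, hu_mem⟩ := exists_seq_tendsto_sInf (range_nonempty F) hbdd
  choose e he using hu_mem
  obtain rfl : F ∘ e = u := funext he
  obtain ⟨x, ψ, hψ, hx⟩ := hsubseq e hu_anti hu_lim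
  have hFx : F x = ⨅ x, F x :=
    tendsto_nhds_unique ((hF.tendsto x).comp hx) (hu_lim.comp hψ.tendsto_atTop)
  exact ⟨x, fun y => hFx ▸ ciInf_le hbdd y⟩

theorem norm_half_smul_add_sq {E : Type*} [NormedAddCommGroup E] [InnerProductSpace ℝ E]
    (a b : E) : ‖(2 : ℝ)⁻¹ • (a + b)‖ ^ 2 + ‖a - b‖ ^ 2 / 4 = (‖a‖ ^ 2 + ‖b‖ ^ 2) / 2 := by
  rw [norm_smul, mul_pow, norm_inv, Real.norm_two]
  linarith [parallelogram_law_with_norm ℝ a b]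

theorem le_add_one_add_abs_of_sub_mul_add_sq_le {a b c x : ℝ} (hb : 0 ≤ b)
    (h : a - b * x + x ^ 2 ≤ c) : x ≤ b + 1 + |c - a| := by
  by_contra! hlt
  have hx1 : 0 < x - 1 := by linarith [abs_nonneg (c - a)]
  nlinarith [le_abs_self (c - a), abs_nonneg (c - a), mul_pos (sub_pos.2 hlt) hx1]

section NormedSpace

variable {E : Type*} [NormedAddCommGroup E] [NormedSpace ℝ E] {N : Submodule ℝ E} {L : E → ℝ}
  {η₀ : E}

theorem ConvexOn.exists_subgradient_of_isMinOn_submodule (hLc : Continuous L)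
    (hL : ConvexOn ℝ univ L) (hη₀ : η₀ ∈ N) (hmin : IsMinOn L N η₀) :
    ∃ φ : E →L[ℝ] ℝ, (∀ n ∈ N, φ n = 0) ∧ ∀ η, L η₀ + φ η ≤ L η := by
  have hA : IsOpen {p : E × ℝ | p.1 ∈ univ ∧ L p.1 < p.2} := by
    simp only [mem_univ, true_and]
    exact isOpen_lt (hLc.comp continuous_fst) continuous_snd
  have hdisj : Disjoint {p : E × ℝ | p.1 ∈ univ ∧ L p.1 < p.2} ((N : Set E) ×ˢ {L η₀}) := by
    rw [Set.disjoint_left]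
    rintro ⟨n, t⟩ ⟨-, hlt⟩ ⟨hn, rfl : t = L η₀⟩
    exact (hmin hn).not_gt hlt
  obtain ⟨f, u, hfA, hfB⟩ := geometric_hahn_banach_open hL.convex_strict_epigraph hA
    (N.convex.prod (convex_singleton _)) hdisj
  set ψ : E →L[ℝ] ℝ := f ∘L .inl ℝ E ℝ
  set α := f (0, 1)
  have hf : ∀ x t, f (x, t) = ψ x + t * α := fun x t => by
    have : ((x, t) : E × ℝ) = (x, 0) + t • (0, 1) := by simp
    rw [this, map_add, map_smul, smul_eq_mul]; rfl
  have hA' : ∀ η t, L η < t → ψ η + t * α < u := fun η t h => hf η t ▸ hfA _ ⟨mem_univ _, h⟩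
  have hB' : ∀ n ∈ N, u ≤ ψ n + L η₀ * α := fun n hn => hf n _ ▸ hfB _ ⟨hn, rfl⟩
  -- `ψ` is bounded below on the subspace `N`, hence zero there.
  have hψN : ∀ n ∈ N, ψ n = 0 := by
    intro n hn
    by_contra hne
    have := hB' (((u - L η₀ * α - 1) / ψ n) • n) (N.smul_mem _ hn)
    rw [map_smul, smul_eq_mul, div_mul_cancel₀ _ hne] at this
    linarith
  have hα : 0 < -α := by
    have := hA' η₀ (L η₀ + 1) (by linarith)
    linarith [hB' η₀ hη₀, hψN η₀ hη₀]
  refine ⟨(-α)⁻¹ • ψ, fun n hn => by simp [hψN n hn],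
    fun η => le_of_forall_pos_lt_add fun s hs => ?_⟩
  have := hA' η (L η + s) (by linarith)
  have hB₀ := hB' η₀ hη₀
  rw [hψN η₀ hη₀] at hB₀
  have key : (-α)⁻¹ * ψ η < L η + s - L η₀ := by
    rw [inv_mul_lt_iff₀ hα]
    linarith
  change L η₀ + (-α)⁻¹ * ψ η < L η + s
  linarith

variable [FiniteDimensional ℝ N]

theorem Continuous.exists_lt_on_thickening_sphere (hLc : Continuous L) (hη₀ : η₀ ∈ N)
    (hstrict : ∀ n ∈ N, n ≠ η₀ → L η₀ < L n) :
    ∃ b > L η₀, ∃ ρ > 0, ∀ n ∈ N, ‖n - η₀‖ = 1 → ∀ k : E, ‖k‖ < ρ → b < L (n + k) := by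
  set S : Set E := Subtype.val '' sphere (⟨η₀, hη₀⟩ : N) 1
  have hS : IsCompact S := (isCompact_sphere _ _).image continuous_subtype_val
  have hmemS : ∀ n ∈ N, ‖n - η₀‖ = 1 → n ∈ S := fun n hn h1 =>
    ⟨⟨n, hn⟩, by rwa [mem_sphere_iff_norm, ← Submodule.norm_coe], rfl⟩
  obtain ⟨a, ha, haS⟩ := hS.exists_forall_le' hLc.continuousOn (a := L η₀) <| by
    rintro _ ⟨n, hn, rfl⟩
    refine hstrict n n.2 fun h => ?_
    rw [mem_sphere_iff_norm, ← Submodule.norm_coe] at hn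
    simp [h] at hn
  obtain ⟨ρ, hρ, hthick⟩ := hS.exists_thickening_subset_open (isOpen_lt continuous_const hLc)
    (fun n hn => (show (L η₀ + a) / 2 < a by linarith).trans_le (haS n hn))
  refine ⟨(L η₀ + a) / 2, by linarith, ρ, hρ, fun n hn h1 k hk => hthick ?_⟩
  exact mem_thickening_iff.2 ⟨n, hmemS n hn h1, by simpa using hk⟩

theorem ConvexOn.exists_norm_sub_le_of_add_le (hLc : Continuous L) (hL : ConvexOn ℝ univ L)
    (hη₀ : η₀ ∈ N) (hstrict : ∀ n ∈ N, n ≠ η₀ → L η₀ < L n) (R c : ℝ) :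
    ∃ C, ∀ n ∈ N, ∀ k : E, ‖k‖ ≤ R → L (n + k) ≤ c → ‖n - η₀‖ ≤ C := by
  obtain ⟨b, hb, ρ, hρ, hball⟩ := hLc.exists_lt_on_thickening_sphere hη₀ hstrict
  refine ⟨max (max 1 (R / ρ)) ((c - L η₀) / (b - L η₀)), fun n hn k hk hc => ?_⟩
  by_contra! hr
  set r := ‖n - η₀‖
  have hr1 : 1 < r := (le_max_left _ _).trans_lt ((le_max_left _ _).trans_lt hr)
  have hr0 : 0 < r := by linarith
  have hrR : R < ρ * r := by
    rw [← div_lt_iff₀' hρ]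
    exact (le_max_right _ _).trans_lt ((le_max_left _ _).trans_lt hr)
  have hrc : c - L η₀ < r * (b - L η₀) := by
    rw [← div_lt_iff₀ (by linarith)]
    exact (le_max_right _ _).trans_lt hr
  -- Shrink `n + k` towards `η₀` by the factor `r⁻¹`: its `N`-part lands on the unit sphere.
  have hpulled : b < L ((η₀ + r⁻¹ • (n - η₀)) + r⁻¹ • k) := by
    refine hball _ (N.add_mem hη₀ (N.smul_mem _ (N.sub_mem hn hη₀))) ?_ _ ?_
    · rw [add_sub_cancel_left, norm_smul, norm_inv, norm_norm, inv_mul_cancel₀ hr0.ne']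
    · rw [norm_smul, norm_inv, norm_norm, inv_mul_lt_iff₀ hr0]
      linarith
  have hcomb : (η₀ + r⁻¹ • (n - η₀)) + r⁻¹ • k = (1 - r⁻¹) • η₀ + r⁻¹ • (n + k) := by
    simp only [smul_sub, sub_smul, one_smul, smul_add]
    abel
  have hconv := hL.2 (mem_univ η₀) (mem_univ (n + k))
    (sub_nonneg.2 (inv_le_one_of_one_le₀ hr1.le)) (inv_nonneg.2 hr0.le) (sub_add_cancel 1 r⁻¹)
  rw [← hcomb, smul_eq_mul, smul_eq_mul] at hconv
  have hgrowth : b - L η₀ < r⁻¹ * (c - L η₀) := by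
    nlinarith [inv_pos.2 hr0]
  rw [lt_inv_mul_iff₀ hr0] at hgrowth
  linarith

end NormedSpace

section Penalized

variable {H : Type*} [NormedAddCommGroup H] [InnerProductSpace ℝ H] {K : Submodule ℝ H}
  [K.HasOrthogonalProjection] {L : H → ℝ}

variable (K L) in
noncomputable def penalized (η : H) : ℝ := L η + ‖K.starProjection η‖ ^ 2

theorem continuous_penalized (hLc : Continuous L) : Continuous (penalized K L) :=
  hLc.add (K.starProjection.continuous.norm.pow 2)

theorem StrictConvexOn.penalized (hL : StrictConvexOn ℝ univ L) :
    StrictConvexOn ℝ univ (penalized K L) :=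
  hL.add_convexOn <| (convexOn_univ_norm.comp_linearMap (K.starProjection : H →ₗ[ℝ] H)).pow
    (fun _ _ => norm_nonneg _) 2

theorem ConvexOn.penalized_half_smul_add_le (hL : ConvexOn ℝ univ L) (x y : H) :
    penalized K L ((2 : ℝ)⁻¹ • (x + y)) + ‖K.starProjection x - K.starProjection y‖ ^ 2 / 4 ≤
      (penalized K L x + penalized K L y) / 2 := by
  have hLmid : L ((2 : ℝ)⁻¹ • (x + y)) ≤ (L x + L y) / 2 := by
    have := hL.2 (mem_univ x) (mem_univ y) (by norm_num) (by norm_num) (add_halves (1 : ℝ))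
    simp only [smul_eq_mul, one_div, ← smul_add] at this
    linarith
  have hJmid := norm_half_smul_add_sq (K.starProjection x) (K.starProjection y)
  rw [← map_add, ← map_smul] at hJmid
  unfold penalized
  linarith

theorem le_penalized_of_forall_add_le {φ : H →L[ℝ] ℝ} (hφ : ∀ n ∈ Kᗮ, φ n = 0) {a : ℝ}
    (hsub : ∀ η, a + φ η ≤ L η) (η : H) :
    a - ‖φ‖ * ‖K.starProjection η‖ + ‖K.starProjection η‖ ^ 2 ≤ penalized K L η := by
  have hφP : φ η = φ (K.starProjection η) := by
    conv_lhs => rw [← K.starProjection_add_starProjection_orthogonal η]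
    rw [map_add, hφ _ (Kᗮ.starProjection_apply_mem η), add_zero]
  have := (abs_le.1 ((φ.le_opNorm (K.starProjection η)).trans_eq' (Real.norm_eq_abs _).symm)).1
  have := hsub η
  unfold penalized
  linarith

theorem bddBelow_range_penalized {φ : H →L[ℝ] ℝ} (hφ : ∀ n ∈ Kᗮ, φ n = 0) {a : ℝ}
    (hsub : ∀ η, a + φ η ≤ L η) : BddBelow (range (penalized K L)) := by
  refine ⟨a - ‖φ‖ ^ 2 / 4, ?_⟩
  rintro _ ⟨η, rfl⟩
  nlinarith [le_penalized_of_forall_add_le hφ hsub η, sq_nonneg (‖K.starProjection η‖ - ‖φ‖ / 2)]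

theorem ConvexOn.isBounded_setOf_penalized_le [FiniteDimensional ℝ Kᗮ] (hLc : Continuous L)
    (hL : ConvexOn ℝ univ L) {η₀ : H} (hη₀ : η₀ ∈ Kᗮ)
    (hstrict : ∀ n ∈ Kᗮ, n ≠ η₀ → L η₀ < L n) {φ : H →L[ℝ] ℝ} (hφ : ∀ n ∈ Kᗮ, φ n = 0)
    (hsub : ∀ η, L η₀ + φ η ≤ L η) (c : ℝ) :
    Bornology.IsBounded {η | penalized K L η ≤ c} := by
  set R := ‖φ‖ + 1 + |c - L η₀|
  have hP : ∀ η, penalized K L η ≤ c → ‖K.starProjection η‖ ≤ R := fun η hη =>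
    le_add_one_add_abs_of_sub_mul_add_sq_le (norm_nonneg φ)
      ((le_penalized_of_forall_add_le hφ hsub η).trans hη)
  obtain ⟨C, hC⟩ := hL.exists_norm_sub_le_of_add_le hLc hη₀ hstrict R c
  refine isBounded_iff_forall_norm_le.2 ⟨R + C + ‖η₀‖, fun η (hη : penalized K L η ≤ c) => ?_⟩
  have hLη : L (Kᗮ.starProjection η + K.starProjection η) ≤ c := by
    rw [add_comm, K.starProjection_add_starProjection_orthogonal]
    unfold penalized at hη
    linarith [sq_nonneg ‖K.starProjection η‖]
  have hQ := hC _ (Kᗮ.starProjection_apply_mem η) _ (hP η hη) hLη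
  calc ‖η‖ = ‖K.starProjection η + (Kᗮ.starProjection η - η₀) + η₀‖ := by
        rw [add_sub, sub_add_cancel, K.starProjection_add_starProjection_orthogonal]
    _ ≤ ‖K.starProjection η‖ + ‖Kᗮ.starProjection η - η₀‖ + ‖η₀‖ := norm_add₃_le
    _ ≤ R + C + ‖η₀‖ := by gcongr; exact hP η hη

theorem ConvexOn.cauchySeq_starProjection (hL : ConvexOn ℝ univ L)
    (hbdd : BddBelow (range (penalized K L))) {e : ℕ → H}
    (he : Tendsto (penalized K L ∘ e) atTop (𝓝 (⨅ η, penalized K L η))) :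
    CauchySeq (K.starProjection ∘ e) := by
  set m := ⨅ η, penalized K L η
  refine cauchySeq_of_dist_sq_le (f := fun j => 2 * (penalized K L (e j) - m)) ?_ fun i j => ?_
  · simpa using (he.sub_const m).const_mul 2
  · have := hL.penalized_half_smul_add_le (K := K) (e i) (e j)
    have := ciInf_le hbdd ((2 : ℝ)⁻¹ • (e i + e j))
    rw [dist_eq_norm]
    dsimp only [Function.comp_apply]
    linarith

theorem ConvexOn.exists_forall_penalized_le [CompleteSpace H] [FiniteDimensional ℝ Kᗮ]
    (hLc : Continuous L) (hL : ConvexOn ℝ univ L) (hbdd : BddBelow (range (penalized K L)))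
    (hsub : ∀ c, Bornology.IsBounded {η | penalized K L η ≤ c}) :
    ∃ η, ∀ ξ, penalized K L η ≤ penalized K L ξ := by
  refine exists_forall_le_of_tendsto_subseq (continuous_penalized hLc) hbdd
    fun e he_anti he_lim => ?_
  obtain ⟨k, hk⟩ := cauchySeq_tendsto_of_complete (hL.cauchySeq_starProjection hbdd he_lim)
  obtain ⟨C, hC⟩ := isBounded_iff_forall_norm_le.1 (hsub (penalized K L (e 0)))
  have hQ : ∀ j, Kᗮ.orthogonalProjectionOnto (e j) ∈ closedBall 0 C := fun j => by
    rw [mem_closedBall_zero_iff]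
    exact (Kᗮ.norm_orthogonalProjectionOnto_apply_le _).trans (hC _ (he_anti (Nat.zero_le j)))
  obtain ⟨n, -, ψ, hψ, hn⟩ := tendsto_subseq_of_bounded isBounded_closedBall hQ
  refine ⟨k + n, ψ, hψ, ?_⟩
  convert (hk.comp hψ.tendsto_atTop).add ((continuous_subtype_val.tendsto n).comp hn) using 2
  exact (K.starProjection_add_starProjection_orthogonal _).symm

end Penalized

theorem smoothing_spline_exists_unique_general
    {H : Type*} [NormedAddCommGroup H] [InnerProductSpace ℝ H] [CompleteSpace H]
    (K : Submodule ℝ H)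
    [K.HasOrthogonalProjection]
    [FiniteDimensional ℝ Kᗮ]
    (L : H → ℝ) (hLcont : Continuous L)
    (hLconv : StrictConvexOn ℝ (Set.univ : Set H) L)
    (J : H → ℝ)
    (hJ : ∀ η : H, J η = ‖((K.orthogonalProjectionOnto η : K) : H)‖ ^ 2)
    (hmin : ∃ η₀ ∈ Kᗮ, ∀ η ∈ Kᗮ, L η₀ ≤ L η) :
    ∃! ηstar : H, ∀ η : H, L ηstar + J ηstar ≤ L η + J η := by
  obtain ⟨η₀, hη₀, hmin⟩ := hmin
  obtain rfl : J = fun η => ‖K.starProjection η‖ ^ 2 := funext hJ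
  change ∃! ηstar, ∀ η, penalized K L ηstar ≤ penalized K L η
  have hminOn : IsMinOn L Kᗮ η₀ := isMinOn_iff.2 hmin
  have hstrict : ∀ n ∈ Kᗮ, n ≠ η₀ → L η₀ < L n := fun n hn hne =>
    (hLconv.subset (subset_univ _) Kᗮ.convex).lt_of_isMinOn hminOn hη₀ hn hne
  obtain ⟨φ, hφ, hsub⟩ :=
    hLconv.convexOn.exists_subgradient_of_isMinOn_submodule hLcont hη₀ hminOn
  refine existsUnique_of_exists_of_unique ?_ fun x y hx hy => ?_
  · exact hLconv.convexOn.exists_forall_penalized_le hLcont (bddBelow_range_penalized hφ hsub)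
      (hLconv.convexOn.isBounded_setOf_penalized_le hLcont hη₀ hstrict hφ hsub)
  · exact hLconv.penalized.eq_of_isMinOn (isMinOn_univ_iff.2 hx) (isMinOn_univ_iff.2 hy)
      (mem_univ x) (mem_univ y)

/-- **Existence and uniqueness of the penalized likelihood estimate**
(Gu & Qiu; Theorem 1 of the paper, with smoothing parameter λ = 1).

Let `H` be a real Hilbert space, `K` a closed subspace whose orthogonal
complement `Kᗮ` is finite dimensional, and let `J η = ‖P_K η‖²` be the
square seminorm given by the orthogonal projection `P_K` onto `K`
(so that `Kᗮ` is the null space of `J`).  If `L : H → ℝ` is continuous and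
strictly convex on `H` and `L` attains a minimum on the null space `Kᗮ`,
then `L + J` has a unique minimizer over `H`. -/
theorem smoothing_spline_exists_unique
    {H : Type*} [NormedAddCommGroup H] [InnerProductSpace ℝ H] [CompleteSpace H]
    (K : Submodule ℝ H) (hKclosed : IsClosed (K : Set H))
    [K.HasOrthogonalProjection]
    [FiniteDimensional ℝ Kᗮ]
    (L : H → ℝ) (hLcont : Continuous L)
    (hLconv : StrictConvexOn ℝ (Set.univ : Set H) L)
    (J : H → ℝ)
    (hJ : ∀ η : H, J η = ‖((K.orthogonalProjectionOnto η : K) : H)‖ ^ 2)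
    (hmin : ∃ η₀ ∈ Kᗮ, ∀ η ∈ Kᗮ, L η₀ ≤ L η) :
    ∃! ηstar : H, ∀ η : H, L ηstar + J ηstar ≤ L η + J η :=
  smoothing_spline_exists_unique_general K L hLcont hLconv J hJ hmin
end

section
/- Assume in addition that the observed values X_1,…,X_n are pairwise distinct. If the directed graph G is connected but not strongly connected, then an NPMLE does not exist: the conditional likelihood ℒ has no maximizer over the probability simplex Δ, i.e., for every p ∈ Δ there exists q ∈ Δ with ℒ(q) > ℒ(p). -/
/-!
Pick `i` that does not reach every vertex and let `A` be the set of vertices reachable from `i`.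
No edge leaves `A`, so every risk set `R k = {j | U k ≤ X j ≤ V k}` with `k ∈ A` lies in `A`;
since `G` is connected, some edge enters `A` from a vertex `b ∉ A`. Doubling the mass of `p`
outside `A` leaves the factors `p k / ∑_{R k} p` with `k ∈ A` unchanged, does not decrease the
others (a risk-set mass at most doubles), and strictly increases the one at `b`, because `R b`
meets `A`. As `ℒ` is invariant under scaling, normalizing the doubled vector gives a point of the
simplex beating `p`. If `ℒ(p) = 0`, the uniform distribution already beats `p`.
-/

open Finset

/-- Directed edge relation of the graph `G` attached to a doubly truncated
dataset: there is an edge from `i` to `j` iff `U i ≤ X j ≤ V i`. -/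
def dtEdge {n : ℕ} (U V X : Fin n → ℝ) (i j : Fin n) : Prop :=
  U i ≤ X j ∧ X j ≤ V i

/-- Conditional likelihood of a doubly truncated dataset at a point `p` of the
probability simplex: `ℒ(p) = ∏ i, p i / ∑_{j : U i ≤ X j ≤ V i} p j`
(in Lean, division by `0` yields `0`, matching the convention `0/0 = 0`). -/
noncomputable def dtLik {n : ℕ} (U V X : Fin n → ℝ) (p : Fin n → ℝ) : ℝ :=
  ∏ i, p i / ∑ j ∈ univ.filter (fun j => U i ≤ X j ∧ X j ≤ V i), p j

-- The instance `dtLik` uses, so that `dtLik U V X = riskLik (dtEdge U V X)` is `rfl`.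
noncomputable instance {n : ℕ} (U V X : Fin n → ℝ) : DecidableRel (dtEdge U V X) :=
  fun i j =>
    inferInstanceAs (Decidable (U i ≤ X j ∧ X j ≤ V i))

theorem Relation.ReflTransGen.exists_rel_into_of_symm {α : Type*} {r : α → α → Prop}
    {A : Set α} (hA : ∀ x ∈ A, ∀ y, r x y → y ∈ A) {i j : α} (hi : i ∈ A) (hj : j ∉ A)
    (h : Relation.ReflTransGen (fun a b => r a b ∨ r b a) i j) :
    ∃ b ∉ A, ∃ a ∈ A, r b a := by
  induction h with
  | refl => exact absurd hi hj
  | @tail c x _ hcx ih =>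
    by_cases hc : c ∈ A
    · rcases hcx with hcx | hxc
      · exact absurd (hA c hc x hcx) hj
      · exact ⟨x, hj, c, hc, hxc⟩
    · exact ih hc

theorem inv_sum_smul_mem_stdSimplex {ι : Type*} [Fintype ι] {w : ι → ℝ}
    (hw : ∀ i, 0 ≤ w i) (hsum : 0 < ∑ i, w i) : (∑ i, w i)⁻¹ • w ∈ stdSimplex ℝ ι := by
  refine ⟨fun i => smul_nonneg (inv_nonneg.2 hsum.le) (hw i), ?_⟩
  simp only [Pi.smul_apply, smul_eq_mul, ← mul_sum]
  exact inv_mul_cancel₀ hsum.ne'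

section DoubleOutside

variable {ι : Type*} {A : Set ι} [DecidablePred (· ∈ A)] {p : ι → ℝ}

def doubleOutside (A : Set ι) [DecidablePred (· ∈ A)] (p : ι → ℝ) (k : ι) : ℝ :=
  if k ∈ A then p k else 2 * p k

theorem doubleOutside_of_mem {k : ι} (hk : k ∈ A) : doubleOutside A p k = p k :=
  if_pos hk

theorem doubleOutside_of_notMem {k : ι} (hk : k ∉ A) : doubleOutside A p k = 2 * p k :=
  if_neg hk

theorem doubleOutside_pos (hp : ∀ i, 0 < p i) (k : ι) : 0 < doubleOutside A p k := by
  unfold doubleOutside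
  split_ifs <;> linarith [hp k]

theorem doubleOutside_le (hp : ∀ i, 0 ≤ p i) (k : ι) : doubleOutside A p k ≤ 2 * p k := by
  unfold doubleOutside
  split_ifs <;> linarith [hp k]

theorem sum_doubleOutside_of_subset {S : Finset ι} (h : ∀ k ∈ S, k ∈ A) :
    ∑ k ∈ S, doubleOutside A p k = ∑ k ∈ S, p k :=
  sum_congr rfl fun k hk => doubleOutside_of_mem (h k hk)

theorem sum_doubleOutside_le (hp : ∀ i, 0 ≤ p i) (S : Finset ι) :
    ∑ k ∈ S, doubleOutside A p k ≤ 2 * ∑ k ∈ S, p k := by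
  rw [mul_sum]
  exact sum_le_sum fun k _ => doubleOutside_le hp k

theorem sum_doubleOutside_lt (hp : ∀ i, 0 < p i) {S : Finset ι} {a : ι} (haS : a ∈ S)
    (haA : a ∈ A) : ∑ k ∈ S, doubleOutside A p k < 2 * ∑ k ∈ S, p k := by
  rw [mul_sum]
  refine sum_lt_sum (fun k _ => doubleOutside_le (fun i => (hp i).le) k) ⟨a, haS, ?_⟩
  rw [doubleOutside_of_mem haA]
  linarith [hp a]

theorem doubleOutside_div_sum_of_notMem {k : ι} (hk : k ∉ A) (S : Finset ι) :
    doubleOutside A p k / ∑ j ∈ S, doubleOutside A p j =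
      p k / ((∑ j ∈ S, doubleOutside A p j) / 2) := by
  rw [doubleOutside_of_notMem hk, div_div_eq_mul_div, mul_comm]

end DoubleOutside

section RiskLikelihood

variable {ι : Type*} [Fintype ι] {r : ι → ι → Prop} [DecidableRel r] {p : ι → ℝ}

noncomputable def riskLik (r : ι → ι → Prop) [DecidableRel r] (p : ι → ℝ) : ℝ :=
  ∏ i, p i / ∑ j ∈ univ.filter (r i), p j

theorem div_sum_pos (hr : ∀ i, r i i) (hp : ∀ i, 0 < p i) (i : ι) :
    0 < p i / ∑ j ∈ univ.filter (r i), p j :=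
  div_pos (hp i) (sum_pos (fun j _ => hp j) ⟨i, mem_filter.2 ⟨mem_univ i, hr i⟩⟩)

theorem riskLik_smul (r : ι → ι → Prop) [DecidableRel r] (p : ι → ℝ) {c : ℝ}
    (hc : c ≠ 0) :
    riskLik r (c • p) = riskLik r p := by
  refine prod_congr rfl fun i _ => ?_
  simp only [Pi.smul_apply, smul_eq_mul, ← mul_sum]
  exact mul_div_mul_left _ _ hc

theorem riskLik_pos (hr : ∀ i, r i i) (hp : ∀ i, 0 < p i) : 0 < riskLik r p :=
  prod_pos fun i _ => div_sum_pos hr hp i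

theorem pos_of_riskLik_pos (hp : ∀ i, 0 ≤ p i) (hL : 0 < riskLik r p) (i : ι) : 0 < p i :=
  (hp i).lt_of_ne' fun hpi => hL.ne' (prod_eq_zero (mem_univ i) (by simp [hpi]))

theorem exists_mem_stdSimplex_riskLik_lt [Nonempty ι] {w : ι → ℝ} (hw : ∀ k, 0 < w k)
    (h : riskLik r p < riskLik r w) : ∃ q ∈ stdSimplex ℝ ι, riskLik r p < riskLik r q := by
  have hsum : 0 < ∑ k, w k := sum_pos (fun k _ => hw k) univ_nonempty
  refine ⟨_, inv_sum_smul_mem_stdSimplex (fun k => (hw k).le) hsum, ?_⟩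
  rwa [riskLik_smul r w (inv_ne_zero hsum.ne')]

theorem riskLik_lt_riskLik_doubleOutside {A : Set ι} [DecidablePred (· ∈ A)]
    (hr : ∀ i, r i i) (hp : ∀ i, 0 < p i) (hA : ∀ k ∈ A, ∀ l, r k l → l ∈ A) {a b : ι}
    (hb : b ∉ A) (ha : a ∈ A) (hba : r b a) :
    riskLik r p < riskLik r (doubleOutside A p) := by
  have half_sum_pos : ∀ k, 0 < (∑ j ∈ univ.filter (r k), doubleOutside A p j) / 2 :=
    fun k => half_pos (sum_pos (fun j _ => doubleOutside_pos hp j)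
      ⟨k, mem_filter.2 ⟨mem_univ k, hr k⟩⟩)
  refine prod_lt_prod (fun k _ => div_sum_pos hr hp k) (fun k _ => ?_) ⟨b, mem_univ b, ?_⟩
  · by_cases hk : k ∈ A
    · rw [doubleOutside_of_mem hk, sum_doubleOutside_of_subset fun l hl =>
        hA k hk l (mem_filter.1 hl).2]
    · rw [doubleOutside_div_sum_of_notMem hk]
      refine div_le_div_of_nonneg_left (hp k).le (half_sum_pos k) ?_
      linarith [sum_doubleOutside_le (A := A) (fun i => (hp i).le) (univ.filter (r k))]
  · rw [doubleOutside_div_sum_of_notMem hb]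
    refine div_lt_div_of_pos_left (hp b) (half_sum_pos b) ?_
    linarith [sum_doubleOutside_lt (A := A) hp (mem_filter.2 ⟨mem_univ a, hba⟩) ha]

end RiskLikelihood

theorem npmle_not_exists_of_connected_not_stronglyConnected_general
    {n : ℕ} (U V X : Fin n → ℝ)
    (htrunc : ∀ i, U i ≤ X i ∧ X i ≤ V i)
    (hconn : ∀ i j : Fin n,
      Relation.ReflTransGen (fun a b => dtEdge U V X a b ∨ dtEdge U V X b a) i j)
    (hnotstrong : ¬ ∀ i j : Fin n, Relation.ReflTransGen (dtEdge U V X) i j) :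
    ∀ p ∈ stdSimplex ℝ (Fin n), ∃ q ∈ stdSimplex ℝ (Fin n),
      dtLik U V X p < dtLik U V X q := by
  classical
  intro p ⟨hp0, hp1⟩
  have : Nonempty (Fin n) :=
    univ_nonempty_iff.1 (nonempty_of_sum_ne_zero (hp1.trans_ne one_ne_zero))
  change ∃ q ∈ _, riskLik (dtEdge U V X) p < riskLik (dtEdge U V X) q
  by_cases hLp : 0 < riskLik (dtEdge U V X) p
  · have hp : ∀ k, 0 < p k := pos_of_riskLik_pos hp0 hLp
    obtain ⟨i, j, hij⟩ : ∃ i j, ¬Relation.ReflTransGen (dtEdge U V X) i j := by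
      simpa only [not_forall] using hnotstrong
    let A := {k | Relation.ReflTransGen (dtEdge U V X) i k}
    have hA : ∀ k ∈ A, ∀ l, dtEdge U V X k l → l ∈ A := fun _ hk _ hkl => hk.tail hkl
    obtain ⟨b, hb, a, ha, hba⟩ := (hconn i j).exists_rel_into_of_symm hA .refl hij
    exact exists_mem_stdSimplex_riskLik_lt (doubleOutside_pos hp)
      (riskLik_lt_riskLik_doubleOutside htrunc hp hA hb ha hba)
  · exact exists_mem_stdSimplex_riskLik_lt (fun _ => one_pos)
      ((not_lt.1 hLp).trans_lt (riskLik_pos htrunc fun _ => one_pos))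

/-- **Nonexistence of the NPMLE** (Xiao & Hudgens).
For a doubly truncated dataset `(U_i, V_i, X_i)`, `i = 1, …, n`, with pairwise
distinct observed values `X_i`, if the directed graph `G` is connected (in the
underlying undirected sense) but not strongly connected, then the conditional
likelihood has no maximizer over the probability simplex: every `p` in the
simplex is strictly beaten by some `q` in the simplex. -/
theorem npmle_not_exists_of_connected_not_stronglyConnected
    {n : ℕ} (U V X : Fin n → ℝ)
    (htrunc : ∀ i, U i ≤ X i ∧ X i ≤ V i)
    (hdistinct : Function.Injective X)
    (hconn : ∀ i j : Fin n,
      Relation.ReflTransGen (fun a b => dtEdge U V X a b ∨ dtEdge U V X b a) i j)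
    (hnotstrong : ¬ ∀ i j : Fin n, Relation.ReflTransGen (dtEdge U V X) i j) :
    ∀ p ∈ stdSimplex ℝ (Fin n), ∃ q ∈ stdSimplex ℝ (Fin n),
      dtLik U V X p < dtLik U V X q :=
  npmle_not_exists_of_connected_not_stronglyConnected_general U V X htrunc hconn hnotstrong
end

section
/- Fix points x_1, …, x_n ∈ [0,1] and define, for continuous η : [0,1] → ℝ, the (unpenalized) negative log-likelihood functional L(η) = −(1/n) ∑_{i=1}^n η(x_i) + log ∫_0^1 e^{η(x)} dx. Then L is strictly convex on the subspace H₀ = {η ∈ C([0,1], ℝ) : ∫_0^1 η(x) dx = 0}: for all η, ξ ∈ H₀ with η ≠ ξ and all t ∈ (0,1), L(tη + (1−t)ξ) < t L(η) + (1−t) L(ξ). -/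
/-!
`L` is the sum of the linear map `η ↦ -(1/n) ∑ η (x i)` and `η ↦ log ∫ exp η`, so it suffices
that the latter is strictly convex along the segment. Normalising `exp η` and `exp ξ` to
probability densities, pointwise strict convexity of `exp` gives strict inequality unless the
densities agree, i.e. unless `η - ξ` is constant on `[0,1]`; two distinct functions of mean zero
never differ by a constant.
-/

open MeasureTheory

/-- The (unpenalized) negative log-likelihood functional for density estimation
on `[0,1]` via the logistic density transform, given data points `x 1, …, x n`:
`L(η) = -(1/n) ∑ i, η (x i) + log ∫_0^1 e^{η}`. -/
noncomputable def negLogLik {n : ℕ} (x : Fin n → ℝ) (η : ℝ → ℝ) : ℝ :=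
  -(1 / (n : ℝ)) * ∑ i, η (x i) +
    Real.log (∫ u in Set.Icc (0 : ℝ) 1, Real.exp (η u))

open Set

theorem setIntegral_exp_sub_const (s : Set ℝ) (f : ℝ → ℝ) (c : ℝ) :
    ∫ u in s, Real.exp (f u - c) = (∫ u in s, Real.exp (f u)) / Real.exp c := by
  simp_rw [Real.exp_sub, integral_div]

section Interval

variable {a b : ℝ}

theorem setIntegral_Icc_eq_intervalIntegral (hab : a ≤ b) (f : ℝ → ℝ) :
    ∫ u in Icc a b, f u = ∫ u in a..b, f u := by
  rw [integral_Icc_eq_integral_Ioc, intervalIntegral.integral_of_le hab]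

theorem setIntegral_Icc_lt_of_continuousOn_of_le_of_exists_lt {f g : ℝ → ℝ} (hab : a < b)
    (hf : ContinuousOn f (Icc a b)) (hg : ContinuousOn g (Icc a b))
    (hle : ∀ u ∈ Icc a b, f u ≤ g u) (hlt : ∃ c ∈ Icc a b, f c < g c) :
    ∫ u in Icc a b, f u < ∫ u in Icc a b, g u := by
  simp only [setIntegral_Icc_eq_intervalIntegral hab.le]
  exact intervalIntegral.integral_lt_integral_of_continuousOn_of_le_of_exists_lt hab hf hg
    (fun u hu => hle u (Ioc_subset_Icc_self hu)) hlt

theorem setIntegral_Icc_exp_pos (hab : a < b) {f : ℝ → ℝ} (hf : ContinuousOn f (Icc a b)) :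
    0 < ∫ u in Icc a b, Real.exp (f u) := by
  rw [setIntegral_Icc_eq_intervalIntegral hab.le]
  exact intervalIntegral.intervalIntegral_pos_of_pos_on
    ((Real.continuous_exp.comp_continuousOn hf).intervalIntegrable_of_Icc hab.le)
    (fun u _ => Real.exp_pos _) hab

theorem not_exists_eq_add_const_of_setIntegral_eq (hab : a < b) {f g : ℝ → ℝ}
    (hg : IntegrableOn g (Icc a b))
    (hfg : ∫ u in Icc a b, f u = ∫ u in Icc a b, g u) (hne : ∃ u ∈ Icc a b, f u ≠ g u) :
    ¬ ∃ c, ∀ u ∈ Icc a b, f u = g u + c := by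
  rintro ⟨c, hc⟩
  have hint : ∫ u in Icc a b, f u = (∫ u in Icc a b, g u) + c * (b - a) := by
    rw [setIntegral_congr_fun measurableSet_Icc hc, integral_add hg
      (integrable_const c), setIntegral_const, Real.volume_real_Icc_of_le hab.le, smul_eq_mul,
      mul_comm]
  have hc0 : c = 0 := by
    have : c * (b - a) = 0 := by linarith
    simpa [sub_ne_zero.2 hab.ne'] using this
  obtain ⟨u, hu, hfgu⟩ := hne
  exact hfgu (by simpa [hc0] using hc u hu)

theorem setIntegral_Icc_exp_convexCombination_lt (hab : a < b) {f g : ℝ → ℝ}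
    (hf : ContinuousOn f (Icc a b)) (hg : ContinuousOn g (Icc a b))
    (hne : ∃ u ∈ Icc a b, f u ≠ g u) {t : ℝ} (ht : t ∈ Ioo (0 : ℝ) 1) :
    ∫ u in Icc a b, Real.exp (t * f u + (1 - t) * g u) <
      t * (∫ u in Icc a b, Real.exp (f u)) + (1 - t) * ∫ u in Icc a b, Real.exp (g u) := by
  have hexp_lt : ∀ {x y : ℝ}, x ≠ y →
      Real.exp (t * x + (1 - t) * y) < t * Real.exp x + (1 - t) * Real.exp y :=
    fun hxy => strictConvexOn_exp.2 (mem_univ _) (mem_univ _) hxy ht.1 (sub_pos.2 ht.2)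
      (by ring)
  have hexp_le : ∀ x y : ℝ,
      Real.exp (t * x + (1 - t) * y) ≤ t * Real.exp x + (1 - t) * Real.exp y :=
    fun x y => convexOn_exp.2 (mem_univ _) (mem_univ _) ht.1.le (sub_pos.2 ht.2).le (by ring)
  have hEf : IntegrableOn (fun u => Real.exp (f u)) (Icc a b) :=
    (Real.continuous_exp.comp_continuousOn hf).integrableOn_Icc
  have hEg : IntegrableOn (fun u => Real.exp (g u)) (Icc a b) :=
    (Real.continuous_exp.comp_continuousOn hg).integrableOn_Icc
  rw [← integral_const_mul, ← integral_const_mul, ← integral_add (hEf.const_mul t)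
    (hEg.const_mul (1 - t))]
  obtain ⟨u, hu, hfgu⟩ := hne
  exact setIntegral_Icc_lt_of_continuousOn_of_le_of_exists_lt hab (by fun_prop) (by fun_prop)
    (fun v _ => hexp_le (f v) (g v)) ⟨u, hu, hexp_lt hfgu⟩

/-- Subtracting `log ∫ exp f` and `log ∫ exp g` normalises both integrals to `1`; the strict
inequality for `∫ exp` then only needs the normalised functions to differ somewhere. -/
theorem log_setIntegral_Icc_exp_convexCombination_lt (hab : a < b) {f g : ℝ → ℝ}
    (hf : ContinuousOn f (Icc a b)) (hg : ContinuousOn g (Icc a b))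
    (hfg : ¬ ∃ c, ∀ u ∈ Icc a b, f u = g u + c) {t : ℝ} (ht : t ∈ Ioo (0 : ℝ) 1) :
    Real.log (∫ u in Icc a b, Real.exp (t * f u + (1 - t) * g u)) <
      t * Real.log (∫ u in Icc a b, Real.exp (f u)) +
        (1 - t) * Real.log (∫ u in Icc a b, Real.exp (g u)) := by
  set A := ∫ u in Icc a b, Real.exp (f u) with hA_def
  set B := ∫ u in Icc a b, Real.exp (g u) with hB_def
  have hA : 0 < A := setIntegral_Icc_exp_pos hab hf
  have hB : 0 < B := setIntegral_Icc_exp_pos hab hg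
  have hne : ∃ u ∈ Icc a b, f u - Real.log A ≠ g u - Real.log B := by
    by_contra! h
    exact hfg ⟨Real.log A - Real.log B, fun u hu => by linarith [h u hu]⟩
  have key := setIntegral_Icc_exp_convexCombination_lt (f := fun u => f u - Real.log A)
    (g := fun u => g u - Real.log B) hab (by fun_prop) (by fun_prop) hne ht
  have hshift : ∀ u, t * (f u - Real.log A) + (1 - t) * (g u - Real.log B) =
      t * f u + (1 - t) * g u - (t * Real.log A + (1 - t) * Real.log B) := fun u => by ring
  simp only [hshift, setIntegral_exp_sub_const, Real.exp_log hA, Real.exp_log hB, ← hA_def,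
    ← hB_def, div_self hA.ne', div_self hB.ne', mul_one, add_sub_cancel] at key
  rw [Real.log_lt_iff_lt_exp (setIntegral_Icc_exp_pos hab (by fun_prop))]
  rwa [div_lt_one (Real.exp_pos _)] at key

end Interval

theorem negLogLik_convexCombination_sub {n : ℕ} (x : Fin n → ℝ) (η ξ : ℝ → ℝ) (t : ℝ) :
    negLogLik x (fun u => t * η u + (1 - t) * ξ u) - (t * negLogLik x η + (1 - t) * negLogLik x ξ)
      = Real.log (∫ u in Icc (0 : ℝ) 1, Real.exp (t * η u + (1 - t) * ξ u)) -
        (t * Real.log (∫ u in Icc (0 : ℝ) 1, Real.exp (η u)) +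
          (1 - t) * Real.log (∫ u in Icc (0 : ℝ) 1, Real.exp (ξ u))) := by
  simp only [negLogLik, Finset.sum_add_distrib, ← Finset.mul_sum]
  ring

theorem negLogLik_strictConvexOn_zeroMean_general
    {n : ℕ} (x : Fin n → ℝ)
    (η ξ : ℝ → ℝ)
    (hη : ContinuousOn η (Set.Icc 0 1)) (hξ : ContinuousOn ξ (Set.Icc 0 1))
    (hη0 : ∫ u in Set.Icc (0 : ℝ) 1, η u = 0)
    (hξ0 : ∫ u in Set.Icc (0 : ℝ) 1, ξ u = 0)
    (hne : ∃ u ∈ Set.Icc (0 : ℝ) 1, η u ≠ ξ u)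
    (t : ℝ) (ht : t ∈ Set.Ioo (0 : ℝ) 1) :
    negLogLik x (fun u => t * η u + (1 - t) * ξ u) <
      t * negLogLik x η + (1 - t) * negLogLik x ξ := by
  have hnonconst : ¬ ∃ c, ∀ u ∈ Icc (0 : ℝ) 1, η u = ξ u + c :=
    not_exists_eq_add_const_of_setIntegral_eq zero_lt_one hξ.integrableOn_Icc
      (hη0.trans hξ0.symm) hne
  have hlog := log_setIntegral_Icc_exp_convexCombination_lt zero_lt_one hη hξ hnonconst ht
  linarith [negLogLik_convexCombination_sub x η ξ t]

/-- **Strict convexity of the negative log-likelihood on the zero-mean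
subspace `H₀`.**  Fix data points `x 1, …, x n ∈ [0,1]`.  The functional
`L(η) = -(1/n) ∑ i, η (x i) + log ∫_0^1 e^{η}` is strictly convex on
`H₀ = {η continuous on [0,1] : ∫_0^1 η = 0}`: for continuous zero-mean `η, ξ`
which differ somewhere on `[0,1]` and `t ∈ (0,1)`,
`L(t η + (1-t) ξ) < t L(η) + (1-t) L(ξ)`. -/
theorem negLogLik_strictConvexOn_zeroMean
    {n : ℕ} (x : Fin n → ℝ) (hx : ∀ i, x i ∈ Set.Icc (0 : ℝ) 1)
    (η ξ : ℝ → ℝ)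
    (hη : ContinuousOn η (Set.Icc 0 1)) (hξ : ContinuousOn ξ (Set.Icc 0 1))
    (hη0 : ∫ u in Set.Icc (0 : ℝ) 1, η u = 0)
    (hξ0 : ∫ u in Set.Icc (0 : ℝ) 1, ξ u = 0)
    (hne : ∃ u ∈ Set.Icc (0 : ℝ) 1, η u ≠ ξ u)
    (t : ℝ) (ht : t ∈ Set.Ioo (0 : ℝ) 1) :
    negLogLik x (fun u => t * η u + (1 - t) * ξ u) <
      t * negLogLik x η + (1 - t) * negLogLik x ξ :=
  negLogLik_strictConvexOn_zeroMean_general x η ξ hη hξ hη0 hξ0 hne t ht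
end

section
/- Let (Ω, 𝒜, ℙ) be a probability space and let X and V be independent real-valued random variables, where V is uniformly distributed on the interval [a, b] with a < b. Let 0 < τ ≤ b − a and define U = V − τ. Assume ℙ(a ≤ X ≤ b − τ) = 1. Then the selection event has probability ℙ(U ≤ X ≤ V) = τ/(b − a) > 0, and for every Borel set A ⊆ ℝ the conditional distribution of X given the selection event equals the unconditional distribution: ℙ(X ∈ A | U ≤ X ≤ V) = ℙ(X ∈ A). Hence under interval sampling with a uniformly distributed right-truncation limit there is no sampling bias. -/
/-!
Since `X` and `V` are independent, `ℙ(X ∈ A, V - τ ≤ X ≤ V)` is the integral over `x ∈ A`, against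
the law of `X`, of `ℙ(V ∈ [x, x + τ])`. For `x ∈ [a, b - τ]`, which holds for almost every `x`,
the window `[x, x + τ]` lies inside `[a, b]`, so this probability is the constant `τ / (b - a)`.
Hence `ℙ(X ∈ A, selected) = τ / (b - a) · ℙ(X ∈ A)`: the selection event is independent of `X`.
-/

open MeasureTheory ProbabilityTheory Set
open scoped ENNReal

namespace ProbabilityTheory

variable {Ω α β : Type*} [MeasurableSpace Ω] [MeasurableSpace α] [MeasurableSpace β]
  {μ : Measure Ω} {X : Ω → α} {Y : Ω → β} {S : Set (α × β)} {c : ℝ≥0∞}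

theorem IndepFun.measure_preimage_inter_eq_mul_of_ae_section [IsFiniteMeasure μ]
    (hXY : IndepFun X Y μ)
    (hX : Measurable X) (hY : Measurable Y) (hS : MeasurableSet S)
    (hsec : ∀ᵐ x ∂μ.map X, μ.map Y (Prod.mk x ⁻¹' S) = c) {A : Set α} (hA : MeasurableSet A) :
    μ ((fun ω ↦ (X ω, Y ω)) ⁻¹' S ∩ X ⁻¹' A) = c * μ (X ⁻¹' A) := by
  have hSA : MeasurableSet (S ∩ Prod.fst ⁻¹' A) := hS.inter (measurable_fst hA)
  have hsecA : ∀ x, μ.map Y (Prod.mk x ⁻¹' (S ∩ Prod.fst ⁻¹' A)) =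
      A.indicator (fun x ↦ μ.map Y (Prod.mk x ⁻¹' S)) x := by
    intro x
    by_cases hx : x ∈ A <;> simp [hx, preimage_inter, preimage_preimage]
  calc μ ((fun ω ↦ (X ω, Y ω)) ⁻¹' S ∩ X ⁻¹' A)
      = (μ.map X).prod (μ.map Y) (S ∩ Prod.fst ⁻¹' A) := by
        rw [← hXY.map_prod_eq_prod_map_map hX.aemeasurable hY.aemeasurable,
          Measure.map_apply (hX.prodMk hY) hSA]
        rfl
    _ = ∫⁻ x in A, μ.map Y (Prod.mk x ⁻¹' S) ∂μ.map X := by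
        rw [Measure.prod_apply hSA, ← lintegral_indicator hA]
        simp_rw [hsecA]
    _ = ∫⁻ _ in A, c ∂μ.map X := setLIntegral_congr_fun_ae hA (hsec.mono fun _ h _ ↦ h)
    _ = c * μ (X ⁻¹' A) := by rw [setLIntegral_const, Measure.map_apply hX hA, mul_comm]

theorem IndepFun.measure_preimage_eq_of_ae_section [IsProbabilityMeasure μ]
    (hXY : IndepFun X Y μ)
    (hX : Measurable X) (hY : Measurable Y) (hS : MeasurableSet S)
    (hsec : ∀ᵐ x ∂μ.map X, μ.map Y (Prod.mk x ⁻¹' S) = c) :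
    μ ((fun ω ↦ (X ω, Y ω)) ⁻¹' S) = c := by
  simpa using hXY.measure_preimage_inter_eq_mul_of_ae_section hX hY hS hsec MeasurableSet.univ

theorem IndepFun.cond_preimage_eq_of_ae_section [IsProbabilityMeasure μ]
    (hXY : IndepFun X Y μ)
    (hX : Measurable X) (hY : Measurable Y) (hS : MeasurableSet S)
    (hsec : ∀ᵐ x ∂μ.map X, μ.map Y (Prod.mk x ⁻¹' S) = c) (hc0 : c ≠ 0) (hctop : c ≠ ∞)
    {A : Set α} (hA : MeasurableSet A) :
    μ[X ⁻¹' A | (fun ω ↦ (X ω, Y ω)) ⁻¹' S] = μ (X ⁻¹' A) := by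
  rw [cond_apply (hX.prodMk hY hS),
    hXY.measure_preimage_inter_eq_mul_of_ae_section hX hY hS hsec hA,
    hXY.measure_preimage_eq_of_ae_section hX hY hS hsec, ← mul_assoc,
    ENNReal.inv_mul_cancel hc0 hctop, one_mul]

end ProbabilityTheory

theorem uniformIcc_apply_Icc_of_subset {a b x y : ℝ} (hab : a < b) (hax : a ≤ x) (hyb : y ≤ b) :
    ((ENNReal.ofReal (b - a))⁻¹ • volume.restrict (Icc a b)) (Icc x y) =
      ENNReal.ofReal ((y - x) / (b - a)) := by
  rw [Measure.smul_apply, smul_eq_mul, Measure.restrict_apply measurableSet_Icc,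
    inter_eq_left.mpr (Icc_subset_Icc hax hyb), Real.volume_Icc,
    ENNReal.ofReal_div_of_pos (sub_pos.mpr hab), ENNReal.div_eq_inv_mul]

def intervalWindow (τ : ℝ) : Set (ℝ × ℝ) := {p | p.2 - τ ≤ p.1 ∧ p.1 ≤ p.2}

theorem measurableSet_intervalWindow (τ : ℝ) : MeasurableSet (intervalWindow τ) :=
  (measurableSet_le (measurable_snd.sub_const τ) measurable_fst).inter
    (measurableSet_le measurable_fst measurable_snd)

theorem preimage_mk_intervalWindow (τ x : ℝ) : Prod.mk x ⁻¹' intervalWindow τ = Icc x (x + τ) := by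
  ext v
  simp only [intervalWindow, mem_preimage, mem_ofPred_eq, mem_Icc]
  constructor <;> rintro ⟨h₁, h₂⟩ <;> constructor <;> linarith

theorem intervalSampling_uniform_no_bias_general
    {Ω : Type*} [MeasurableSpace Ω] (μ : Measure Ω) [IsProbabilityMeasure μ]
    (X V : Ω → ℝ) (hXm : Measurable X) (hVm : Measurable V)
    (hindep : IndepFun X V μ)
    (a b : ℝ) (hab : a < b)
    (hV : Measure.map V μ =
      (ENNReal.ofReal (b - a))⁻¹ • volume.restrict (Set.Icc a b))
    (τ : ℝ) (hτ0 : 0 < τ)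
    (U : Ω → ℝ) (hU : ∀ ω, U ω = V ω - τ)
    (hsupp : μ {ω | a ≤ X ω ∧ X ω ≤ b - τ} = 1) :
    μ {ω | U ω ≤ X ω ∧ X ω ≤ V ω} = ENNReal.ofReal (τ / (b - a)) ∧
      ∀ A : Set ℝ, MeasurableSet A →
        μ[X ⁻¹' A | {ω | U ω ≤ X ω ∧ X ω ≤ V ω}] = μ (X ⁻¹' A) := by
  have hE : {ω | U ω ≤ X ω ∧ X ω ≤ V ω} = (fun ω ↦ (X ω, V ω)) ⁻¹' intervalWindow τ := by
    ext ω
    simp [intervalWindow, hU]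
  have hX_mem : ∀ᵐ x ∂μ.map X, x ∈ Icc a (b - τ) := by
    refine (ae_map_iff hXm.aemeasurable (p := (· ∈ Icc a (b - τ))) measurableSet_Icc).mpr ?_
    exact (ae_iff_measure_eq (measurableSet_Icc.preimage hXm).nullMeasurableSet).mpr
      (hsupp.trans measure_univ.symm)
  have hsec : ∀ᵐ x ∂μ.map X,
      μ.map V (Prod.mk x ⁻¹' intervalWindow τ) = ENNReal.ofReal (τ / (b - a)) := by
    filter_upwards [hX_mem] with x ⟨hax, hxb⟩
    rw [preimage_mk_intervalWindow, hV, uniformIcc_apply_Icc_of_subset hab hax (by linarith),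
      add_sub_cancel_left]
  have hc0 : ENNReal.ofReal (τ / (b - a)) ≠ 0 :=
    ENNReal.ofReal_pos.mpr (div_pos hτ0 (sub_pos.mpr hab)) |>.ne'
  rw [hE]
  exact ⟨hindep.measure_preimage_eq_of_ae_section hXm hVm (measurableSet_intervalWindow τ) hsec,
    fun A hA ↦ hindep.cond_preimage_eq_of_ae_section hXm hVm (measurableSet_intervalWindow τ)
      hsec hc0 ENNReal.ofReal_ne_top hA⟩

/-- **No sampling bias under interval sampling with a uniform right-truncation
limit.**  Let `X` and `V` be independent real random variables on a probability
space, with `V` uniformly distributed on `[a, b]` (`a < b`).  Let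
`0 < τ ≤ b - a`, set `U = V - τ`, and assume `ℙ(a ≤ X ≤ b - τ) = 1`.
Then the selection event `{U ≤ X ≤ V}` has probability `τ / (b - a) > 0`, and
for every Borel set `A ⊆ ℝ` the conditional distribution of `X` given the
selection event coincides with the unconditional one:
`ℙ(X ∈ A | U ≤ X ≤ V) = ℙ(X ∈ A)`. -/
theorem intervalSampling_uniform_no_bias
    {Ω : Type*} [MeasurableSpace Ω] (μ : Measure Ω) [IsProbabilityMeasure μ]
    (X V : Ω → ℝ) (hXm : Measurable X) (hVm : Measurable V)
    (hindep : IndepFun X V μ)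
    (a b : ℝ) (hab : a < b)
    (hV : Measure.map V μ =
      (ENNReal.ofReal (b - a))⁻¹ • volume.restrict (Set.Icc a b))
    (τ : ℝ) (hτ0 : 0 < τ) (hτ : τ ≤ b - a)
    (U : Ω → ℝ) (hU : ∀ ω, U ω = V ω - τ)
    (hsupp : μ {ω | a ≤ X ω ∧ X ω ≤ b - τ} = 1) :
    μ {ω | U ω ≤ X ω ∧ X ω ≤ V ω} = ENNReal.ofReal (τ / (b - a)) ∧
      ∀ A : Set ℝ, MeasurableSet A →
        μ[X ⁻¹' A | {ω | U ω ≤ X ω ∧ X ω ≤ V ω}] = μ (X ⁻¹' A) :=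
  intervalSampling_uniform_no_bias_general μ X V hXm hVm hindep a b hab hV τ hτ0 U hU hsupp
end
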